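/- Let T be an R-tree with an isometric action of F_N with dense orbits, equipped with a finite supporting subtree K, and suppose μ, μ' are two ergodic invariant length measures on T with nondegenerate supports in K. If Supp(μ|_K) ∩ Supp(μ'|_K) contains a nondegenerate arc, then Supp(μ|_K) = Supp(μ'|_K). -/

import Mathlib

open Pointwise

/-- The segment `[x,y]` in a metric space (in an `ℝ`-tree this is the arc from `x` to `y`). -/
def seg {T : Type*} [MetricSpace T] (x y : T) : Set T :=
  {z : T | dist x z + dist z y = dist x y}

/-- An `ℝ`-tree: a geodesic metric space that is `0`-hyperbolic (four-point condition),
equivalently any two points are joined by a unique arc, isometric to a real interval. -/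
def IsRTree (T : Type*) [MetricSpace T] : Prop :=
  (∀ x y : T, ∃ f : ℝ → T, f 0 = x ∧ f (dist x y) = y ∧
      ∀ s ∈ Set.Icc (0 : ℝ) (dist x y), ∀ t ∈ Set.Icc (0 : ℝ) (dist x y),
        dist (f s) (f t) = |s - t|) ∧
  ∀ x y z w : T, dist x y + dist z w ≤ max (dist x z + dist y w) (dist x w + dist y z)

/-- A subtree: a convex subset. -/
def IsSubtree {T : Type*} [MetricSpace T] (Y : Set T) : Prop :=
  ∀ x ∈ Y, ∀ y ∈ Y, seg x y ⊆ Y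

/-- An arc: a subset isometric to a nondegenerate closed real interval. -/
def IsArc {T : Type*} [MetricSpace T] (A : Set T) : Prop :=
  ∃ (a b : ℝ) (f : ℝ → T), a < b ∧
    (∀ s ∈ Set.Icc a b, ∀ t ∈ Set.Icc a b, dist (f s) (f t) = |s - t|) ∧
    A = f '' Set.Icc a b

/-- A transverse family: a `G`-invariant collection of nondegenerate subtrees, any two
distinct members of which intersect in at most one point. -/
structure IsTransverseFamily (G : Type*) {T : Type*} [Group G] [MulAction G T]
    [MetricSpace T] (F : Set (Set T)) : Prop where
  invariant : ∀ (g : G), ∀ Y ∈ F, g • Y ∈ F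
  subtree : ∀ Y ∈ F, IsSubtree Y
  nondeg : ∀ Y ∈ F, ¬Y.Subsingleton
  transverse : ∀ Y ∈ F, ∀ Y' ∈ F, Y ≠ Y' → (Y ∩ Y').Subsingleton

open MeasureTheory

/-- A finite subtree: a finite union of segments. -/
def IsFiniteSubtree {T : Type*} [MetricSpace T] (K : Set T) : Prop :=
  ∃ (n : ℕ) (p q : Fin n → T), K = ⋃ i, seg (p i) (q i)

/-- A supporting subtree: every arc of `T` is covered by finitely many `G`-translates. -/
def IsSupporting (G : Type*) {T : Type*} [Group G] [MulAction G T] [MetricSpace T]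
    (K : Set T) : Prop :=
  ∀ A : Set T, IsArc A → ∃ (r : ℕ) (g : Fin r → G), A ⊆ ⋃ i, g i • K

/-- The support of the restriction `μ|_K`: points of `K` all of whose neighborhoods meet `K`
in a set of positive `μ`-measure. -/
def suppIn {T : Type*} [MetricSpace T] [MeasurableSpace T] (μ : Measure T) (K : Set T) :
    Set T :=
  {x : T | x ∈ K ∧ ∀ U : Set T, IsOpen U → x ∈ U → μ (U ∩ K) ≠ 0}

/-- An invariant measure is ergodic if every invariant measurable set is null or conull. -/
def IsErgodicMeasure (G : Type*) {T : Type*} [Group G] [MulAction G T] [MetricSpace T]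
    [MeasurableSpace T] (μ : Measure T) : Prop :=
  ∀ A : Set T, MeasurableSet A → (∀ g : G, g • A = A) → μ A = 0 ∨ μ Aᶜ = 0

/-!
Let `A` be the common arc. If `μ'` vanished on a neighbourhood `C` (in `K`) of a point of the
support of `μ|_K`, the `F_N`-saturation of `C` would be `μ`-conull by ergodicity, so some
translate `g • C` meets `A` in a set of positive `μ`-measure. An ergodic measure charging an arc
of `K` has no atoms, so this intersection, being a subtree, contains an arc. That arc lies in
the support of `μ'|_K`, hence has positive `μ'`-measure, although it sits in the `μ'`-null set
`g • C`. The geometric input is that an arc in the support of `ν|_K` has positive `ν`-measure,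
because near a generic point of the arc the finite tree `K` is contained in the arc. Exchanging
the roles of `μ` and `μ'` gives equality.
-/

open Set

section Geometry

variable {T : Type*} [MetricSpace T]

lemma seg_comm (x y : T) : seg x y = seg y x := by
  ext z
  simp only [seg, mem_ofPred_eq, dist_comm x, dist_comm z y, add_comm]

lemma isClosed_seg (x y : T) : IsClosed (seg x y) :=
  isClosed_eq (by fun_prop) continuous_const

lemma IsFiniteSubtree.isClosed {K : Set T} (hK : IsFiniteSubtree K) : IsClosed K := by
  obtain ⟨n, p, q, rfl⟩ := hK
  exact isClosed_iUnion_of_finite fun i => isClosed_seg _ _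

lemma IsSubtree.inter {Y Z : Set T} (hY : IsSubtree Y) (hZ : IsSubtree Z) :
    IsSubtree (Y ∩ Z) :=
  fun x hx y hy _ hz => ⟨hY x hx.1 y hy.1 hz, hZ x hx.2 y hy.2 hz⟩

lemma IsSubtree.smul {G : Type*} [Group G] [MulAction G T]
    (hiso : ∀ g : G, Isometry fun x : T => g • x) {Y : Set T} (hY : IsSubtree Y) (g : G) :
    IsSubtree (g • Y) := by
  rintro _ ⟨u, hu, rfl⟩ _ ⟨v, hv, rfl⟩ z hz
  refine ⟨g⁻¹ • z, hY u hu v hv ?_, smul_inv_smul g z⟩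
  have hdist : ∀ x y : T, dist (g • x) (g • y) = dist x y := (hiso g).dist_eq
  show dist u (g⁻¹ • z) + dist (g⁻¹ • z) v = dist u v
  rw [← hdist u, ← hdist _ v, ← hdist u v, smul_inv_smul]
  exact hz

lemma IsRTree.dist_eq_of_mem_seg (hT : IsRTree T) {x y z w : T} (hz : z ∈ seg x y)
    (hw : w ∈ seg x y) : dist z w = |dist x z - dist x w| := by
  have hz' : dist x z + dist z y = dist x y := hz
  have hw' : dist x w + dist w y = dist x y := hw
  have h4 := hT.2 z w x y
  have hge := abs_dist_sub_le z w x
  rw [dist_comm z x, dist_comm w x] at h4 hge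
  grind

lemma IsRTree.isSubtree_ball (hT : IsRTree T) (c : T) (r : ℝ) :
    IsSubtree (Metric.ball c r) := by
  intro u hu v hv m hm
  have hm' : dist u m + dist m v = dist u v := hm
  rw [Metric.mem_ball, dist_comm] at hu hv ⊢
  rcases le_max_iff.1 (hT.2 c m u v) with h | h
  · linarith [dist_nonneg (x := u) (y := m)]
  · linarith [dist_nonneg (x := m) (y := v), dist_comm m u]

lemma IsRTree.mem_seg_of_dist_lt (hT : IsRTree T) {p q u w y z : T} (hu : u ∈ seg p q)
    (hw : w ∈ seg p q) (hy : y ∈ seg p q) (hz : z ∈ seg p q) (hyuw : y ∈ seg u w)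
    (hzu : dist y z < dist u y) (hzw : dist y z < dist y w) : z ∈ seg u w := by
  have hd {a b : T} (ha : a ∈ seg p q) (hb : b ∈ seg p q) := hT.dist_eq_of_mem_seg ha hb
  have hyuw' : dist u y + dist y w = dist u w := hyuw
  show dist u z + dist z w = dist u w
  rw [hd hu hy, hd hy hw, hd hu hw] at hyuw'
  rw [hd hy hz, hd hu hy] at hzu
  rw [hd hy hz, hd hy hw] at hzw
  rw [hd hu hz, hd hz hw, hd hu hw]
  grind

end Geometry

section Parametrization

variable {T : Type*} [MetricSpace T] {a b : ℝ} {h : ℝ → T}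

lemma apply_mem_seg_of_mem_Icc
    (hh : ∀ s ∈ Icc a b, ∀ t ∈ Icc a b, dist (h s) (h t) = |s - t|) {s t r : ℝ}
    (hs : s ∈ Icc a b) (ht : t ∈ Icc a b) (hr : r ∈ Icc s t) : h r ∈ seg (h s) (h t) := by
  have hr' : r ∈ Icc a b := ⟨hs.1.trans hr.1, hr.2.trans ht.2⟩
  show dist (h s) (h r) + dist (h r) (h t) = dist (h s) (h t)
  rw [hh s hs r hr', hh r hr' t ht, hh s hs t ht, abs_of_nonpos (sub_nonpos.2 hr.1),
    abs_of_nonpos (sub_nonpos.2 hr.2), abs_of_nonpos (sub_nonpos.2 (hr.1.trans hr.2))]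
  ring

lemma IsRTree.seg_subset_image (hT : IsRTree T)
    (hh : ∀ s ∈ Icc a b, ∀ t ∈ Icc a b, dist (h s) (h t) = |s - t|) {s t : ℝ}
    (hs : s ∈ Icc a b) (ht : t ∈ Icc a b) : seg (h s) (h t) ⊆ h '' Icc a b := by
  wlog hst : s ≤ t generalizing s t
  · rw [seg_comm]
    exact this ht hs (le_of_not_ge hst)
  intro z hz
  have hz' : dist (h s) z + dist z (h t) = t - s := by
    rw [← abs_of_nonneg (sub_nonneg.2 hst), abs_sub_comm, ← hh s hs t ht]
    exact hz
  -- the parameter of `z` on the arc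
  set r := s + dist (h s) z
  have hr : r ∈ Icc s t := ⟨by linarith [dist_nonneg (x := h s) (y := z)],
    by linarith [dist_nonneg (x := z) (y := h t)]⟩
  have hr' : r ∈ Icc a b := ⟨hs.1.trans hr.1, hr.2.trans ht.2⟩
  have hzr : dist z (h r) = 0 := by
    rw [hT.dist_eq_of_mem_seg hz (apply_mem_seg_of_mem_Icc hh hs ht hr), hh s hs r hr']
    simp [r]
  exact ⟨r, hr', (dist_eq_zero.1 hzr).symm⟩

end Parametrization

section Arc

variable {T : Type*} [MetricSpace T]

lemma IsRTree.isSubtree_of_isArc (hT : IsRTree T) {A : Set T} (hA : IsArc A) : IsSubtree A := by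
  obtain ⟨a, b, h, -, hh, rfl⟩ := hA
  rintro _ ⟨s, hs, rfl⟩ _ ⟨t, ht, rfl⟩
  exact hT.seg_subset_image hh hs ht

lemma IsArc.infinite {A : Set T} (hA : IsArc A) : A.Infinite := by
  obtain ⟨a, b, h, hab, hh, rfl⟩ := hA
  refine (Icc_infinite hab).image fun s hs t ht hst => ?_
  simpa [hst, sub_eq_zero, eq_comm] using hh s hs t ht

lemma IsRTree.exists_isArc_subset (hT : IsRTree T) {Y : Set T} (hY : IsSubtree Y)
    (hnt : Y.Nontrivial) : ∃ B, IsArc B ∧ B ⊆ Y := by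
  obtain ⟨u, hu, v, hv, huv⟩ := hnt
  obtain ⟨f, hf0, hfd, hf⟩ := hT.1 u v
  have hpos : 0 < dist u v := dist_pos.2 huv
  refine ⟨f '' Icc 0 (dist u v), ⟨0, dist u v, f, hpos, hf, rfl⟩, ?_⟩
  rintro _ ⟨s, hs, rfl⟩
  have hseg :=
    apply_mem_seg_of_mem_Icc hf (left_mem_Icc.2 hpos.le) (right_mem_Icc.2 hpos.le) hs
  rw [hf0, hfd] at hseg
  exact hY u hu v hv hseg

end Arc

lemma exists_mem_Ioo_forall_exists_lt_lt {ι : Type*} [Finite ι] {a b : ℝ} (hab : a < b)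
    (J : ι → Set ℝ) (hJb : ∀ i, BddBelow (J i)) (hJa : ∀ i, BddAbove (J i)) :
    ∃ t ∈ Ioo a b, ∀ i, t ∈ J i → ∃ c ∈ J i, ∃ d ∈ J i, c < t ∧ t < d := by
  have hfin : (⋃ i, {sInf (J i), sSup (J i)}).Finite :=
    finite_iUnion fun i => (finite_singleton _).insert _
  obtain ⟨t, ht, htF⟩ := ((Ioo_infinite hab).sdiff hfin).nonempty
  simp only [mem_iUnion, mem_insert_iff, mem_singleton_iff, not_exists, not_or] at htF
  refine ⟨t, ht, fun i hti => ?_⟩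
  obtain ⟨c, hc, hct⟩ :=
    exists_lt_of_csInf_lt ⟨t, hti⟩ ((csInf_le (hJb i) hti).lt_of_ne (Ne.symm (htF i).1))
  obtain ⟨d, hd, htd⟩ :=
    exists_lt_of_lt_csSup ⟨t, hti⟩ ((le_csSup (hJa i) hti).lt_of_ne (htF i).2)
  exact ⟨c, hc, d, hd, hct, htd⟩

open Filter Topology

section Support

variable {T : Type*} [MetricSpace T]

lemma IsRTree.eventually_mem_image_of_mem_seg (hT : IsRTree T) {a b : ℝ} {h : ℝ → T}
    (hh : ∀ s ∈ Icc a b, ∀ t ∈ Icc a b, dist (h s) (h t) = |s - t|) {p q : T} {c t d : ℝ}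
    (hc : c ∈ Icc a b) (hd : d ∈ Icc a b) (hct : c < t) (htd : t < d)
    (hcS : h c ∈ seg p q) (htS : h t ∈ seg p q) (hdS : h d ∈ seg p q) :
    ∀ᶠ z in 𝓝 (h t), z ∈ seg p q → z ∈ h '' Icc a b := by
  have ht : t ∈ Icc a b := ⟨hc.1.trans hct.le, htd.le.trans hd.2⟩
  filter_upwards [Metric.ball_mem_nhds (h t) (lt_min (sub_pos.2 hct) (sub_pos.2 htd))]
    with z hz hzS
  rw [Metric.mem_ball, dist_comm] at hz
  refine hT.seg_subset_image hh hc hd (hT.mem_seg_of_dist_lt hcS hdS htS hzS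
    (apply_mem_seg_of_mem_Icc hh hc hd ⟨hct.le, htd.le⟩) (hz.trans_le ?_) (hz.trans_le ?_))
  · rw [hh c hc t ht, abs_sub_comm, abs_of_pos (sub_pos.2 hct)]
    exact min_le_left _ _
  · rw [hh t ht d hd, abs_sub_comm, abs_of_pos (sub_pos.2 htd)]
    exact min_le_right _ _

variable [MeasurableSpace T]

lemma measure_ne_zero_of_eventually_mem {μ : Measure T} {K B : Set T} {x : T}
    (hx : x ∈ suppIn μ K) (hB : ∀ᶠ z in 𝓝 x, z ∈ K → z ∈ B) : μ B ≠ 0 := by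
  obtain ⟨U, hUB, hU, hxU⟩ := eventually_nhds_iff.1 hB
  exact fun h0 => hx.2 U hU hxU (measure_mono_null (fun z hz => hUB z hz.1 hz.2) h0)

/-- Near a parameter that is interior to the trace of the arc on every segment of `K`, the
whole of `K` lies on the arc. -/
lemma IsRTree.measure_ne_zero_of_isArc_subset_suppIn (hT : IsRTree T) {K : Set T}
    (hK : IsFiniteSubtree K) {μ : Measure T} {B : Set T} (hB : IsArc B)
    (hBs : B ⊆ suppIn μ K) : μ B ≠ 0 := by
  obtain ⟨a, b, h, hab, hh, rfl⟩ := hB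
  obtain ⟨n, p, q, rfl⟩ := hK
  obtain ⟨t, ht, htJ⟩ := exists_mem_Ioo_forall_exists_lt_lt hab
    (fun i => Icc a b ∩ h ⁻¹' seg (p i) (q i))
    (fun _ => bddBelow_Icc.mono inter_subset_left) (fun _ => bddAbove_Icc.mono inter_subset_left)
  have ht' : t ∈ Icc a b := Ioo_subset_Icc_self ht
  have hloc : ∀ i, ∀ᶠ z in 𝓝 (h t), z ∈ seg (p i) (q i) → z ∈ h '' Icc a b := by
    intro i
    by_cases hti : h t ∈ seg (p i) (q i)
    · obtain ⟨c, ⟨hc, hcS⟩, d, ⟨hd, hdS⟩, hct, htd⟩ := htJ i ⟨ht', hti⟩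
      exact hT.eventually_mem_image_of_mem_seg hh hc hd hct htd hcS hti hdS
    · filter_upwards [(isClosed_seg _ _).isOpen_compl.mem_nhds hti] with z hz hzS
      exact absurd hzS hz
  refine measure_ne_zero_of_eventually_mem (hBs ⟨t, ht', rfl⟩) ?_
  filter_upwards [eventually_all.2 hloc] with z hz hzK
  obtain ⟨i, hi⟩ := mem_iUnion.1 hzK
  exact hz i hi

end Support

section Ergodic

variable {T : Type*} [MetricSpace T] [MeasurableSpace T] {μ : Measure T}

lemma IsFiniteSubtree.measure_ne_top {K : Set T} (hK : IsFiniteSubtree K)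
    (hfin : ∀ x y : T, μ (seg x y) < ⊤) : μ K ≠ ⊤ := by
  obtain ⟨n, p, q, rfl⟩ := hK
  exact ((measure_iUnion_fintype_le μ _).trans_lt (ENNReal.sum_lt_top.2 fun i _ => hfin _ _)).ne

lemma suppIn_subset_closure_inter {K s : Set T} (hs : μ sᶜ = 0) :
    suppIn μ K ⊆ closure (s ∩ K) := by
  intro x hx
  by_contra hxs
  exact hx.2 _ isClosed_closure.isOpen_compl hxs
    (measure_mono_null (fun z hz hzs => hz.1 (subset_closure ⟨hzs, hz.2⟩)) hs)

variable {G : Type*} [Group G] [MulAction G T] [Countable G]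

lemma IsErgodicMeasure.exists_measure_inter_smul_ne_zero [MeasurableConstSMul G T]
    (herg : IsErgodicMeasure G μ) {A C : Set T} (hC : MeasurableSet C) (hC0 : μ C ≠ 0)
    (hA : μ A ≠ 0) : ∃ g : G, μ (A ∩ g • C) ≠ 0 := by
  have hinv : ∀ g : G, g • ⋃ h : G, h • C = ⋃ h : G, h • C := fun g => by
    simp only [smul_set_iUnion, smul_smul]
    exact (Equiv.mulLeft g).iSup_comp (g := fun h => h • C)
  have hconull : μ (⋃ g : G, g • C)ᶜ = 0 :=
    (herg _ (MeasurableSet.iUnion fun g => hC.const_smul g) hinv).resolve_left fun h0 =>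
      hC0 (measure_mono_null (subset_iUnion_of_subset 1 (one_smul G C).ge) h0)
  rw [← measure_inter_conull hconull, inter_iUnion] at hA
  by_contra! hall
  exact hA (measure_iUnion_null hall)

variable [SMulInvariantMeasure G T μ]

/-- An atom spreads along its orbit, which is then conull; since all its points carry the
same mass, only finitely many of them lie in `K`. -/
lemma IsErgodicMeasure.suppIn_finite_of_measure_singleton_ne_zero [MeasurableSingletonClass T]
    (herg : IsErgodicMeasure G μ) {K : Set T} (hK : μ K ≠ ⊤) {x : T} (hx : μ {x} ≠ 0) :
    (suppIn μ K).Finite := by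
  have horb : μ (MulAction.orbit G x)ᶜ = 0 :=
    (herg _ (countable_range _).measurableSet fun g => MulAction.smul_orbit g x).resolve_left
      fun h0 => hx (measure_mono_null (singleton_subset_iff.2 (MulAction.mem_orbit_self x)) h0)
  have hKfin : {z : K | μ {x} ≤ μ {(z : T)}}.Finite :=
    Measure.finite_const_le_meas_of_disjoint_iUnion μ (pos_iff_ne_zero.2 hx)
      (fun _ => measurableSet_singleton _)
      (fun z w hzw => disjoint_singleton.2 (Subtype.coe_injective.ne hzw))
      (by rwa [iUnion_singleton_eq_range, Subtype.range_coe])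
  have hfin : (MulAction.orbit G x ∩ K).Finite := by
    refine (hKfin.image Subtype.val).subset ?_
    rintro _ ⟨⟨g, rfl⟩, hz⟩
    exact ⟨⟨_, hz⟩, by simp [← smul_set_singleton, measure_smul], rfl⟩
  exact hfin.subset ((suppIn_subset_closure_inter horb).trans hfin.isClosed.closure_subset)

lemma IsErgodicMeasure.nullSingletonClass [MeasurableSingletonClass T]
    (herg : IsErgodicMeasure G μ) {K : Set T} (hK : μ K ≠ ⊤) {A : Set T} (hA : IsArc A)
    (hAs : A ⊆ suppIn μ K) : NullSingletonClass μ :=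
  ⟨fun _ => by_contra fun hx =>
    hA.infinite ((herg.suppIn_finite_of_measure_singleton_ne_zero hK hx).subset hAs)⟩

end Ergodic

lemma IsRTree.suppIn_subset_suppIn {T : Type*} [MetricSpace T] [MeasurableSpace T]
    [BorelSpace T] {G : Type*} [Group G] [MulAction G T] [Countable G] (hT : IsRTree T)
    (hiso : ∀ g : G, Isometry fun x : T => g • x) {K : Set T} (hKsub : IsSubtree K)
    (hKfin : IsFiniteSubtree K) {μ μ' : Measure T} [SMulInvariantMeasure G T μ]
    [SMulInvariantMeasure G T μ'] (hK : μ K ≠ ⊤) (herg : IsErgodicMeasure G μ) {A : Set T}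
    (hA : IsArc A) (hAμ : A ⊆ suppIn μ K) (hAμ' : A ⊆ suppIn μ' K) :
    suppIn μ K ⊆ suppIn μ' K := by
  have : MeasurableConstSMul G T := ⟨fun g => (hiso g).continuous.measurable⟩
  have := herg.nullSingletonClass hK hA hAμ
  intro x hx
  refine ⟨hx.1, fun U hU hxU hU0 => ?_⟩
  obtain ⟨ε, hε, hball⟩ := Metric.isOpen_iff.1 hU x hxU
  set C := Metric.ball x ε ∩ K
  have hC' : μ' C = 0 := measure_mono_null (inter_subset_inter_left K hball) hU0
  obtain ⟨g, hg⟩ := herg.exists_measure_inter_smul_ne_zero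
    (measurableSet_ball.inter hKfin.isClosed.measurableSet)
    (hx.2 _ Metric.isOpen_ball (Metric.mem_ball_self hε))
    (hT.measure_ne_zero_of_isArc_subset_suppIn hKfin hA hAμ)
  have hD : IsSubtree (A ∩ g • C) :=
    (hT.isSubtree_of_isArc hA).inter (((hT.isSubtree_ball x ε).inter hKsub).smul hiso g)
  obtain ⟨B, hB, hBD⟩ :=
    hT.exists_isArc_subset hD (not_subsingleton_iff.1 fun hs => hg (hs.measure_zero μ))
  refine hT.measure_ne_zero_of_isArc_subset_suppIn hKfin hB
    (hBD.trans (inter_subset_left.trans hAμ'))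
    (measure_mono_null (hBD.trans inter_subset_right) ?_)
  rwa [measure_smul]

theorem ergodic_supports_eq_of_overlap_general
    {T : Type*} [MetricSpace T] [MeasurableSpace T] [BorelSpace T]
    {N : ℕ} [MulAction (FreeGroup (Fin N)) T]
    (hT : IsRTree T) (hiso : ∀ g : FreeGroup (Fin N), Isometry fun x : T => g • x)
    (K : Set T) (hKsub : IsSubtree K) (hKfin : IsFiniteSubtree K)
    (μ μ' : Measure T)
    [SMulInvariantMeasure (FreeGroup (Fin N)) T μ]
    [SMulInvariantMeasure (FreeGroup (Fin N)) T μ']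
    (hfin : ∀ x y : T, μ (seg x y) < ⊤) (hfin' : ∀ x y : T, μ' (seg x y) < ⊤)
    (herg : IsErgodicMeasure (FreeGroup (Fin N)) μ)
    (herg' : IsErgodicMeasure (FreeGroup (Fin N)) μ')
    (hoverlap : ∃ A : Set T, IsArc A ∧ A ⊆ suppIn μ K ∩ suppIn μ' K) :
    suppIn μ K = suppIn μ' K := by
  obtain ⟨A, hA, hAs⟩ := hoverlap
  obtain ⟨hAμ, hAμ'⟩ := subset_inter_iff.1 hAs
  exact Subset.antisymm
    (hT.suppIn_subset_suppIn hiso hKsub hKfin (hKfin.measure_ne_top hfin) herg hA hAμ hAμ')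
    (hT.suppIn_subset_suppIn hiso hKsub hKfin (hKfin.measure_ne_top hfin') herg' hA hAμ' hAμ)

/-- Two ergodic invariant length measures on an `F_N`-tree with dense orbits whose supports in
a finite supporting subtree `K` are nondegenerate and share a nondegenerate arc have equal
supports in `K`. -/
theorem ergodic_supports_eq_of_overlap
    {T : Type*} [MetricSpace T] [MeasurableSpace T] [BorelSpace T]
    {N : ℕ} [MulAction (FreeGroup (Fin N)) T]
    (hT : IsRTree T) (hiso : ∀ g : FreeGroup (Fin N), Isometry fun x : T => g • x)
    (hdense : ∀ x : T, Dense (MulAction.orbit (FreeGroup (Fin N)) x : Set T))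
    (K : Set T) (hKsub : IsSubtree K) (hKfin : IsFiniteSubtree K)
    (hKsupp : IsSupporting (FreeGroup (Fin N)) K)
    (μ μ' : Measure T)
    [SMulInvariantMeasure (FreeGroup (Fin N)) T μ]
    [SMulInvariantMeasure (FreeGroup (Fin N)) T μ']
    (hfin : ∀ x y : T, μ (seg x y) < ⊤) (hfin' : ∀ x y : T, μ' (seg x y) < ⊤)
    (herg : IsErgodicMeasure (FreeGroup (Fin N)) μ)
    (herg' : IsErgodicMeasure (FreeGroup (Fin N)) μ')
    (hnd : ∃ A : Set T, IsArc A ∧ A ⊆ suppIn μ K)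
    (hnd' : ∃ A : Set T, IsArc A ∧ A ⊆ suppIn μ' K)
    (hoverlap : ∃ A : Set T, IsArc A ∧ A ⊆ suppIn μ K ∩ suppIn μ' K) :
    suppIn μ K = suppIn μ' K :=
  ergodic_supports_eq_of_overlap_general hT hiso K hKsub hKfin μ μ' hfin hfin' herg herg' hoverlap
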